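/- arXiv:math/0402229 — 5 statements merged into one kernel-verified Lean document; each statement's English description precedes it below -/
import Mathlib

section
/- Fix Q ∈ ℝ_+^{m×k×n} with strictly positive entries, P ∈ ℝ_+^{m×n}, and let P*(i,l,j) = Q(i,l,j) P(i,j) / Q̄(i,j) with Q̄(i,j) = Σ_l Q(i,l,j). Then for every T ∈ 𝒫 (i.e., Σ_l T(i,l,j) = P(i,j)), the Pythagorean identity D(T||Q) = D(T||P*) + D(P*||Q) holds. -/
open scoped BigOperators

noncomputable def DT {m k n : ℕ} (A B : Fin m → Fin k → Fin n → ℝ) : ℝ :=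
  ∑ i, ∑ l, ∑ j, (A i l j * Real.log (A i l j / B i l j) - A i l j + B i l j)

lemma pyth_key {k : ℕ} (q t : Fin k → ℝ) (p : ℝ)
    (hq : ∀ l, 0 < q l) (ht : ∀ l, 0 ≤ t l) (hp : 0 ≤ p)
    (htp : ∑ l, t l = p) :
    ∑ l, (t l * Real.log (t l / q l) - t l + q l)
      = ∑ l, (t l * Real.log (t l / (q l * p / (∑ l', q l'))) - t l
          + q l * p / (∑ l', q l'))
      + ∑ l, ((q l * p / (∑ l', q l')) * Real.log ((q l * p / (∑ l', q l')) / q l)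
          - q l * p / (∑ l', q l') + q l) := by
  rcases Nat.eq_zero_or_pos k with hk | hk
  · subst hk; simp
  have : Nonempty (Fin k) := ⟨⟨0, hk⟩⟩
  set s := ∑ l', q l' with hs_def
  have hs : 0 < s := Finset.sum_pos (fun l _ => hq l) Finset.univ_nonempty
  rcases eq_or_lt_of_le hp with hp0 | hp0
  · -- p = 0, hence all t l = 0
    have ht0 : ∀ l, t l = 0 := by
      intro l
      have := (Finset.sum_eq_zero_iff_of_nonneg (fun l _ => ht l)).mp
        (htp.trans hp0.symm)
      exact this l (Finset.mem_univ l)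
    simp [ht0, ← hp0]
  · -- p > 0
    have hqp : ∑ l, q l * p / s = p := by
      rw [← Finset.sum_div, ← Finset.sum_mul, ← hs_def]
      field_simp
    have hmain : ∀ l, t l * Real.log (t l / q l)
        = t l * Real.log (t l / (q l * p / s)) + t l * Real.log (p / s) := by
      intro l
      rcases eq_or_lt_of_le (ht l) with h0 | h0
      · simp [← h0]
      · rw [Real.log_div h0.ne' (hq l).ne',
          Real.log_div h0.ne' (div_pos (mul_pos (hq l) hp0) hs).ne',
          Real.log_div (mul_pos (hq l) hp0).ne' hs.ne',
          Real.log_mul (hq l).ne' hp0.ne',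
          Real.log_div hp0.ne' hs.ne']
        ring
    have hlog : ∀ l, (q l * p / s) / q l = p / s := by
      intro l
      rw [div_right_comm, mul_comm (q l) p, mul_div_assoc, div_self (hq l).ne',
        mul_one]
    calc ∑ l, (t l * Real.log (t l / q l) - t l + q l)
        = ∑ l, (((t l * Real.log (t l / (q l * p / s)) - t l + q l * p / s)
            + ((q l * p / s) * Real.log ((q l * p / s) / q l) - q l * p / s + q l))
            + (t l - q l * p / s) * Real.log (p / s)) := by
          apply Finset.sum_congr rfl
          intro l _
          rw [hmain l, hlog l]
          ring
      _ = ∑ l, ((t l * Real.log (t l / (q l * p / s)) - t l + q l * p / s)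
            + ((q l * p / s) * Real.log ((q l * p / s) / q l) - q l * p / s + q l))
            + ∑ l, (t l - q l * p / s) * Real.log (p / s) := Finset.sum_add_distrib
      _ = ∑ l, ((t l * Real.log (t l / (q l * p / s)) - t l + q l * p / s)
            + ((q l * p / s) * Real.log ((q l * p / s) / q l) - q l * p / s + q l)) := by
          rw [← Finset.sum_mul, Finset.sum_sub_distrib, htp, hqp, sub_self,
            zero_mul, add_zero]
      _ = _ := Finset.sum_add_distrib

theorem pythagoras_P {m k n : ℕ}
    (Q : Fin m → Fin k → Fin n → ℝ) (P : Matrix (Fin m) (Fin n) ℝ)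
    (hQ : ∀ i l j, 0 < Q i l j) (hP : ∀ i j, 0 ≤ P i j)
    (T : Fin m → Fin k → Fin n → ℝ)
    (hT : ∀ i l j, 0 ≤ T i l j)
    (hTP : ∀ i j, ∑ l, T i l j = P i j) :
    DT T Q =
      DT T (fun i l j => Q i l j * P i j / (∑ l', Q i l' j)) +
      DT (fun i l j => Q i l j * P i j / (∑ l', Q i l' j)) Q := by
  unfold DT
  have h1 : ∀ (f : Fin m → Fin k → Fin n → ℝ),
      ∑ i, ∑ l, ∑ j, f i l j = ∑ i, ∑ j, ∑ l, f i l j :=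
    fun f => Finset.sum_congr rfl fun i _ => Finset.sum_comm ..
  rw [h1, h1, h1, ← Finset.sum_add_distrib]
  refine Finset.sum_congr rfl fun i _ => ?_
  rw [← Finset.sum_add_distrib]
  refine Finset.sum_congr rfl fun j _ => ?_
  exact pyth_key (fun l => Q i l j) (fun l => T i l j) (P i j)
    (fun l => hQ i l j) (fun l => hT i l j) (hP i j) (hTP i j)
end

section
/- Let P and Q be strictly positive joint distributions of (U, V₁, V₂) on a finite space, and suppose under Q that U and V₂ are conditionally independent given V₁. Then E_P[D(P^{U|V₁,V₂}||Q^{U|V₁,V₂})] = E_P[D(P^{U|V₁,V₂}||P^{U|V₁})] + E_P[D(P^{U|V₁}||Q^{U|V₁})]. -/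
open scoped BigOperators

/-- Conditional distribution of `U` given `(V₁,V₂)`. -/
noncomputable def condUV {α β γ : Type*} [Fintype α]
    (p : α → β → γ → ℝ) (u : α) (v1 : β) (v2 : γ) : ℝ :=
  p u v1 v2 / ∑ u', p u' v1 v2

/-- Conditional distribution of `U` given `V₁`. -/
noncomputable def condU1 {α β γ : Type*} [Fintype α] [Fintype γ]
    (p : α → β → γ → ℝ) (u : α) (v1 : β) : ℝ :=
  (∑ v2, p u v1 v2) / ∑ u', ∑ v2, p u' v1 v2

theorem kl_conditional_decomposition {α β γ : Type*}
    [Fintype α] [Fintype β] [Fintype γ]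
    (p q : α → β → γ → ℝ)
    (hp : ∀ u v1 v2, 0 < p u v1 v2) (hq : ∀ u v1 v2, 0 < q u v1 v2)
    (hps : ∑ u, ∑ v1, ∑ v2, p u v1 v2 = 1)
    (hqs : ∑ u, ∑ v1, ∑ v2, q u v1 v2 = 1)
    (hci : ∀ u v1 v2, condUV q u v1 v2 = condU1 q u v1) :
    (∑ v1, ∑ v2, (∑ u, p u v1 v2) *
        (∑ u, condUV p u v1 v2 *
          Real.log (condUV p u v1 v2 / condUV q u v1 v2))) =
    (∑ v1, ∑ v2, (∑ u, p u v1 v2) *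
        (∑ u, condUV p u v1 v2 *
          Real.log (condUV p u v1 v2 / condU1 p u v1))) +
    (∑ v1, (∑ u, ∑ v2, p u v1 v2) *
        (∑ u, condU1 p u v1 *
          Real.log (condU1 p u v1 / condU1 q u v1))) := by
  have hneα : Nonempty α := by
    by_contra h
    rw [not_nonempty_iff] at h
    simp at hps
  have hneγ : Nonempty γ := by
    by_contra h
    rw [not_nonempty_iff] at h
    simp at hps
  have hS : ∀ v1 v2, (0:ℝ) < ∑ u', p u' v1 v2 := fun v1 v2 =>
    Finset.sum_pos (fun u _ => hp u v1 v2) Finset.univ_nonempty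
  have hSq : ∀ v1 v2, (0:ℝ) < ∑ u', q u' v1 v2 := fun v1 v2 =>
    Finset.sum_pos (fun u _ => hq u v1 v2) Finset.univ_nonempty
  have hTp : ∀ v1, (0:ℝ) < ∑ u', ∑ v2, p u' v1 v2 := fun v1 =>
    Finset.sum_pos (fun u _ =>
      Finset.sum_pos (fun v2 _ => hp u v1 v2) Finset.univ_nonempty) Finset.univ_nonempty
  have hTq : ∀ v1, (0:ℝ) < ∑ u', ∑ v2, q u' v1 v2 := fun v1 =>
    Finset.sum_pos (fun u _ =>
      Finset.sum_pos (fun v2 _ => hq u v1 v2) Finset.univ_nonempty) Finset.univ_nonempty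
  have hA : ∀ u v1 v2, (0:ℝ) < condUV p u v1 v2 := fun u v1 v2 =>
    div_pos (hp u v1 v2) (hS v1 v2)
  have hB : ∀ u v1, (0:ℝ) < condU1 p u v1 := fun u v1 =>
    div_pos (Finset.sum_pos (fun v2 _ => hp u v1 v2) Finset.univ_nonempty) (hTp v1)
  have hC : ∀ u v1, (0:ℝ) < condU1 q u v1 := fun u v1 =>
    div_pos (Finset.sum_pos (fun v2 _ => hq u v1 v2) Finset.univ_nonempty) (hTq v1)
  simp only [hci]
  have e1 : ∀ (v1 : β) (v2 : γ) (f : α → ℝ),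
      (∑ u, p u v1 v2) * (∑ u, condUV p u v1 v2 * f u) = ∑ u, p u v1 v2 * f u := by
    intro v1 v2 f
    rw [Finset.mul_sum]
    refine Finset.sum_congr rfl fun u _ => ?_
    rw [condUV]
    have h := (hS v1 v2).ne'
    field_simp
  have e2 : ∀ (v1 : β) (g : α → ℝ),
      (∑ u, ∑ v2, p u v1 v2) * (∑ u, condU1 p u v1 * g u)
        = ∑ u, (∑ v2, p u v1 v2) * g u := by
    intro v1 g
    rw [Finset.mul_sum]
    refine Finset.sum_congr rfl fun u _ => ?_
    rw [condU1]
    have h := (hTp v1).ne'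
    field_simp
  simp only [e1, e2, Finset.sum_mul]
  have e3 : ∀ v1 : β,
      (∑ u, ∑ v2, p u v1 v2 * Real.log (condU1 p u v1 / condU1 q u v1))
        = ∑ v2, ∑ u, p u v1 v2 * Real.log (condU1 p u v1 / condU1 q u v1) := fun v1 =>
    Finset.sum_comm
  simp only [e3]
  rw [← Finset.sum_add_distrib]
  refine Finset.sum_congr rfl fun v1 _ => ?_
  rw [← Finset.sum_add_distrib]
  refine Finset.sum_congr rfl fun v2 _ => ?_
  rw [← Finset.sum_add_distrib]
  refine Finset.sum_congr rfl fun u _ => ?_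
  rw [Real.log_div (hA u v1 v2).ne' (hC u v1).ne',
      Real.log_div (hA u v1 v2).ne' (hB u v1).ne',
      Real.log_div (hB u v1).ne' (hC u v1).ne']
  ring
end

section
/- Let V ∈ ℝ_+^{m×n} be strictly positive, and let (Wⁿ, Hⁿ) be strictly positive matrices with Hⁿ row stochastic. Define the updates W^{n+1}_{il} = Σ_j V_{ij} Wⁿ_{il} Hⁿ_{lj} / (WⁿHⁿ)_{ij} and H^{n+1}_{lj} = (Σ_i V_{ij} Wⁿ_{il} Hⁿ_{lj} / (WⁿHⁿ)_{ij}) / (Σ_{i,j} V_{ij} Wⁿ_{il} Hⁿ_{lj} / (WⁿHⁿ)_{ij}). Then D(V||W^{n+1}H^{n+1}) ≤ D(V||WⁿHⁿ). -/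
open scoped BigOperators

/-- I-divergence between matrices (real formula). -/
noncomputable def DM {m n : ℕ} (A B : Matrix (Fin m) (Fin n) ℝ) : ℝ :=
  ∑ i, ∑ j, (A i j * Real.log (A i j / B i j) - A i j + B i j)

private lemma klterm {x y : ℝ} (hx : 0 < x) (hy : 0 < y) :
    x - y ≤ x * (Real.log x - Real.log y) := by
  have h := Real.log_le_sub_one_of_pos (show 0 < y / x from div_pos hy hx)
  rw [Real.log_div hy.ne' hx.ne'] at h
  have hxy : x * (y / x) = y := by field_simp
  nlinarith [mul_nonneg hx.le (sub_nonneg.2 h)]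

private lemma logsum {ι : Type*} [Fintype ι] (a b : ι → ℝ)
    (ha : ∀ l, 0 < a l) (hb : ∀ l, 0 < b l) :
    ∑ l, a l * (Real.log (b l) - Real.log (a l)) ≤
      (∑ l, a l) * (Real.log (∑ l, b l) - Real.log (∑ l, a l)) := by
  rcases isEmpty_or_nonempty ι with hι | hι
  · simp
  have hne : (Finset.univ : Finset ι).Nonempty := Finset.univ_nonempty
  have hsa : 0 < ∑ l, a l := Finset.sum_pos (fun l _ => ha l) hne
  have hsb : 0 < ∑ l, b l := Finset.sum_pos (fun l _ => hb l) hne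
  have hr : 0 < (∑ l, a l) / (∑ l, b l) := div_pos hsa hsb
  have key : ∀ l, a l - b l * ((∑ l, a l) / (∑ l, b l)) ≤
      a l * (Real.log (a l) - Real.log (b l))
        - a l * (Real.log (∑ l, a l) - Real.log (∑ l, b l)) := by
    intro l
    have h := klterm (ha l) (mul_pos (hb l) hr)
    rw [Real.log_mul (hb l).ne' hr.ne', Real.log_div hsa.ne' hsb.ne'] at h
    nlinarith [h]
  have hsum := Finset.sum_le_sum (s := Finset.univ) (fun l _ => key l)
  rw [Finset.sum_sub_distrib, Finset.sum_sub_distrib, ← Finset.sum_mul, ← Finset.sum_mul] at hsum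
  have h1 : (∑ l, b l) * ((∑ l, a l) / (∑ l, b l)) = ∑ l, a l := by field_simp
  have h2 : ∑ l, a l * (Real.log (a l) - Real.log (b l))
      = - ∑ l, a l * (Real.log (b l) - Real.log (a l)) := by
    rw [← Finset.sum_neg_distrib]; exact Finset.sum_congr rfl fun l _ => by ring
  rw [h1, h2] at hsum
  linarith
theorem nmf_update_descent {m k n : ℕ}
    (V : Matrix (Fin m) (Fin n) ℝ) (W : Matrix (Fin m) (Fin k) ℝ)
    (H : Matrix (Fin k) (Fin n) ℝ)
    (hV : ∀ i j, 0 < V i j) (hW : ∀ i l, 0 < W i l) (hH : ∀ l j, 0 < H l j)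
    (hrow : ∀ l, ∑ j, H l j = 1)
    (W' : Matrix (Fin m) (Fin k) ℝ) (H' : Matrix (Fin k) (Fin n) ℝ)
    (hW' : ∀ i l, W' i l = ∑ j, V i j * (W i l * H l j) / (W * H) i j)
    (hH' : ∀ l j, H' l j =
      (∑ i, V i j * (W i l * H l j) / (W * H) i j) /
      (∑ i, ∑ j', V i j' * (W i l * H l j') / (W * H) i j')) :
    DM V (W' * H') ≤ DM V (W * H) := by
  rcases Nat.eq_zero_or_pos m with hm | hm
  · subst hm; simp [DM]
  rcases Nat.eq_zero_or_pos n with hn | hn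
  · subst hn; simp [DM]
  rcases Nat.eq_zero_or_pos k with hk | hk
  · subst hk
    have hEq : W' * H' = W * H := by
      ext i j; simp [Matrix.mul_apply]
    rw [hEq]
  have hmne : (Finset.univ : Finset (Fin m)).Nonempty := ⟨⟨0, hm⟩, Finset.mem_univ _⟩
  have hnne : (Finset.univ : Finset (Fin n)).Nonempty := ⟨⟨0, hn⟩, Finset.mem_univ _⟩
  have hkne : (Finset.univ : Finset (Fin k)).Nonempty := ⟨⟨0, hk⟩, Finset.mem_univ _⟩
  have hA : ∀ i j, 0 < (W * H) i j := fun i j => by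
    rw [Matrix.mul_apply]
    exact Finset.sum_pos (fun l _ => mul_pos (hW i l) (hH l j)) hkne
  have hc : ∀ i l j, 0 < V i j * (W i l * H l j) / (W * H) i j :=
    fun i l j => div_pos (mul_pos (hV i j) (mul_pos (hW i l) (hH l j))) (hA i j)
  have hW'pos : ∀ i l, 0 < W' i l := fun i l => by
    rw [hW' i l]; exact Finset.sum_pos (fun j _ => hc i l j) hnne
  have hS : ∀ l, 0 < ∑ i, ∑ j', V i j' * (W i l * H l j') / (W * H) i j' :=
    fun l => Finset.sum_pos (fun i _ => Finset.sum_pos (fun j _ => hc i l j) hnne) hmne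
  have hH'pos : ∀ l j, 0 < H' l j := fun l j => by
    rw [hH' l j]
    exact div_pos (Finset.sum_pos (fun i _ => hc i l j) hmne) (hS l)
  have hH'row : ∀ l, ∑ j, H' l j = 1 := by
    intro l
    simp only [hH']
    rw [← Finset.sum_div, Finset.sum_comm, div_self (hS l).ne']
  have hB : ∀ i j, 0 < (W' * H') i j := fun i j => by
    rw [Matrix.mul_apply]
    exact Finset.sum_pos (fun l _ => mul_pos (hW'pos i l) (hH'pos l j)) hkne
  have hsumcol : ∀ l j, ∑ i, V i j * (W i l * H l j) / (W * H) i j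
      = (∑ i, ∑ j', V i j' * (W i l * H l j') / (W * H) i j') * H' l j := by
    intro l j
    rw [hH' l j, ← mul_div_assoc]
    exact (mul_div_cancel_left₀ _ (hS l).ne').symm
  rw [← sub_nonneg]
  have expand : DM V (W * H) - DM V (W' * H') =
      ∑ i, ∑ j, (V i j * (Real.log ((W' * H') i j) - Real.log ((W * H) i j))
        + ((W * H) i j - (W' * H') i j)) := by
    unfold DM
    rw [← Finset.sum_sub_distrib]
    refine Finset.sum_congr rfl fun i _ => ?_
    rw [← Finset.sum_sub_distrib]
    refine Finset.sum_congr rfl fun j _ => ?_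
    rw [Real.log_div (hV i j).ne' (hA i j).ne', Real.log_div (hV i j).ne' (hB i j).ne']
    ring
  rw [expand]
  -- Jensen / log-sum step, per entry
  have step1 : ∀ i j,
      (V i j / (W * H) i j) *
        (∑ l, (W i l * H l j) * (Real.log (W' i l * H' l j) - Real.log (W i l * H l j)))
        + ((W * H) i j - (W' * H') i j)
      ≤ V i j * (Real.log ((W' * H') i j) - Real.log ((W * H) i j))
        + ((W * H) i j - (W' * H') i j) := by
    intro i j
    have hls := logsum (fun l => W i l * H l j) (fun l => W' i l * H' l j)
      (fun l => mul_pos (hW i l) (hH l j)) (fun l => mul_pos (hW'pos i l) (hH'pos l j))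
    rw [← Matrix.mul_apply, ← Matrix.mul_apply] at hls
    have hdiv : 0 < V i j / (W * H) i j := div_pos (hV i j) (hA i j)
    have h2 := mul_le_mul_of_nonneg_left hls hdiv.le
    have hAid : (V i j / (W * H) i j) *
        ((W * H) i j * (Real.log ((W' * H') i j) - Real.log ((W * H) i j)))
        = V i j * (Real.log ((W' * H') i j) - Real.log ((W * H) i j)) := by
      rw [div_mul_eq_mul_div, mul_left_comm, mul_div_cancel_left₀ _ (hA i j).ne']
    rw [hAid] at h2
    linarith
  refine le_trans ?_ (Finset.sum_le_sum fun i _ => Finset.sum_le_sum fun j _ => step1 i j)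
  -- rearrange each entry
  have rearr : ∀ i j, (V i j / (W * H) i j) *
      (∑ l, (W i l * H l j) * (Real.log (W' i l * H' l j) - Real.log (W i l * H l j)))
    = (∑ l, (V i j * (W i l * H l j) / (W * H) i j) * (Real.log (W' i l) - Real.log (W i l)))
      + (∑ l, (V i j * (W i l * H l j) / (W * H) i j) * (Real.log (H' l j) - Real.log (H l j))) := by
    intro i j
    rw [Finset.mul_sum, ← Finset.sum_add_distrib]
    refine Finset.sum_congr rfl fun l _ => ?_
    rw [Real.log_mul (hW'pos i l).ne' (hH'pos l j).ne', Real.log_mul (hW i l).ne' (hH l j).ne']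
    ring
  have split : ∑ i, ∑ j, ((V i j / (W * H) i j) *
      (∑ l, (W i l * H l j) * (Real.log (W' i l * H' l j) - Real.log (W i l * H l j)))
      + ((W * H) i j - (W' * H') i j))
    = (∑ i, ∑ j, ∑ l, (V i j * (W i l * H l j) / (W * H) i j) * (Real.log (W' i l) - Real.log (W i l)))
      + (∑ i, ∑ j, ∑ l, (V i j * (W i l * H l j) / (W * H) i j) * (Real.log (H' l j) - Real.log (H l j)))
      + (∑ i, ∑ j, ((W * H) i j - (W' * H') i j)) := by
    rw [← Finset.sum_add_distrib, ← Finset.sum_add_distrib]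
    refine Finset.sum_congr rfl fun i _ => ?_
    rw [← Finset.sum_add_distrib, ← Finset.sum_add_distrib]
    refine Finset.sum_congr rfl fun j _ => ?_
    rw [rearr i j]
  rw [split]
  have E1 : ∑ i, ∑ j, ∑ l, (V i j * (W i l * H l j) / (W * H) i j) * (Real.log (W' i l) - Real.log (W i l))
      = ∑ i, ∑ l, W' i l * (Real.log (W' i l) - Real.log (W i l)) := by
    refine Finset.sum_congr rfl fun i _ => ?_
    rw [Finset.sum_comm]
    refine Finset.sum_congr rfl fun l _ => ?_
    rw [← Finset.sum_mul, ← hW' i l]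
  have E2 : ∑ i, ∑ j, ∑ l, (V i j * (W i l * H l j) / (W * H) i j) * (Real.log (H' l j) - Real.log (H l j))
      = ∑ l, (∑ i, ∑ j', V i j' * (W i l * H l j') / (W * H) i j')
          * ∑ j, H' l j * (Real.log (H' l j) - Real.log (H l j)) := by
    calc ∑ i, ∑ j, ∑ l, (V i j * (W i l * H l j) / (W * H) i j) * (Real.log (H' l j) - Real.log (H l j))
        = ∑ j, ∑ i, ∑ l, (V i j * (W i l * H l j) / (W * H) i j) * (Real.log (H' l j) - Real.log (H l j)) :=
          Finset.sum_comm
      _ = ∑ j, ∑ l, ∑ i, (V i j * (W i l * H l j) / (W * H) i j) * (Real.log (H' l j) - Real.log (H l j)) :=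
          Finset.sum_congr rfl fun j _ => Finset.sum_comm
      _ = ∑ l, ∑ j, ∑ i, (V i j * (W i l * H l j) / (W * H) i j) * (Real.log (H' l j) - Real.log (H l j)) :=
          Finset.sum_comm
      _ = ∑ l, (∑ i, ∑ j', V i j' * (W i l * H l j') / (W * H) i j')
            * ∑ j, H' l j * (Real.log (H' l j) - Real.log (H l j)) := by
          refine Finset.sum_congr rfl fun l _ => ?_
          rw [Finset.mul_sum]
          refine Finset.sum_congr rfl fun j _ => ?_
          rw [← Finset.sum_mul, hsumcol l j]
          ring
  have E3 : ∑ i, ∑ j, ((W * H) i j - (W' * H') i j) = ∑ i, ∑ l, (W i l - W' i l) := by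
    refine Finset.sum_congr rfl fun i _ => ?_
    rw [Finset.sum_sub_distrib, Finset.sum_sub_distrib]
    congr 1
    · simp only [Matrix.mul_apply]
      rw [Finset.sum_comm]
      refine Finset.sum_congr rfl fun l _ => ?_
      rw [← Finset.mul_sum, hrow l, mul_one]
    · simp only [Matrix.mul_apply]
      rw [Finset.sum_comm]
      refine Finset.sum_congr rfl fun l _ => ?_
      rw [← Finset.mul_sum, hH'row l, mul_one]
  rw [E1, E2, E3]
  have N1 : 0 ≤ (∑ i, ∑ l, W' i l * (Real.log (W' i l) - Real.log (W i l)))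
      + ∑ i, ∑ l, (W i l - W' i l) := by
    rw [← Finset.sum_add_distrib]
    refine Finset.sum_nonneg fun i _ => ?_
    rw [← Finset.sum_add_distrib]
    refine Finset.sum_nonneg fun l _ => ?_
    have := klterm (hW'pos i l) (hW i l)
    linarith
  have N2 : 0 ≤ ∑ l, (∑ i, ∑ j', V i j' * (W i l * H l j') / (W * H) i j')
      * ∑ j, H' l j * (Real.log (H' l j) - Real.log (H l j)) := by
    refine Finset.sum_nonneg fun l _ => mul_nonneg (hS l).le ?_
    have hkl := Finset.sum_le_sum (s := Finset.univ)
      (fun j _ => klterm (hH'pos l j) (hH l j))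
    rw [Finset.sum_sub_distrib, hH'row l, hrow l] at hkl
    linarith
  linarith
end

section
/- Under the alternating minimization scheme Qₙ → Pₙ = P*(Qₙ) → Q_{n+1} = Q*(Pₙ), the divergence decrease satisfies the exact identity D(P||Q̄ₙ) = D(Pₙ||P_{n+1}) + D(P||Q̄_{n+1}) + D(Q_{n+1}||Qₙ), where Q̄ₙ(i,j) = Σ_l Qₙ(i,l,j). -/
open scoped BigOperators

/-- Solution of the first partial minimization problem. -/
noncomputable def Pstar {m k n : ℕ} (Q : Fin m → Fin k → Fin n → ℝ)
    (P : Matrix (Fin m) (Fin n) ℝ) : Fin m → Fin k → Fin n → ℝ :=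
  fun i l j => Q i l j * P i j / (∑ l', Q i l' j)

/-- Solution of the second partial minimization problem. -/
noncomputable def Qstar {m k n : ℕ} (T : Fin m → Fin k → Fin n → ℝ) :
    Fin m → Fin k → Fin n → ℝ :=
  fun i l j => (∑ j', T i l j') * ((∑ i', T i' l j) / (∑ i', ∑ j', T i' l j'))

private lemma aux {m k n : ℕ} (hm : 0 < m) (hk : 0 < k) (hn : 0 < n)
    (P : Matrix (Fin m) (Fin n) ℝ) (hP : ∀ i j, 0 < P i j)
    (Qm : Matrix (Fin m) (Fin k) ℝ) (Qp : Matrix (Fin k) (Fin n) ℝ)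
    (hQm : ∀ i l, 0 < Qm i l) (hQp : ∀ l j, 0 < Qp l j) :
    DM P (fun i j => ∑ l, Qm i l * Qp l j) =
      DT (Pstar (fun i l j => Qm i l * Qp l j) P)
         (Pstar (Qstar (Pstar (fun i l j => Qm i l * Qp l j) P)) P) +
      DM P (fun i j => ∑ l,
         (Qstar (Pstar (fun i l j => Qm i l * Qp l j) P)) i l j) +
      DT (Qstar (Pstar (fun i l j => Qm i l * Qp l j) P))
         (fun i l j => Qm i l * Qp l j) := by
  haveI : Nonempty (Fin m) := ⟨⟨0, hm⟩⟩
  haveI : Nonempty (Fin k) := ⟨⟨0, hk⟩⟩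
  haveI : Nonempty (Fin n) := ⟨⟨0, hn⟩⟩
  set Q : Fin m → Fin k → Fin n → ℝ := fun i l j => Qm i l * Qp l j with hQdef
  set T : Fin m → Fin k → Fin n → ℝ := Pstar Q P with hTdef
  set Q2 : Fin m → Fin k → Fin n → ℝ := Qstar T with hQ2def
  set T2 : Fin m → Fin k → Fin n → ℝ := Pstar Q2 P with hT2def
  have hQpos : ∀ i l j, 0 < Q i l j := fun i l j => mul_pos (hQm i l) (hQp l j)
  have hQb : ∀ i j, 0 < ∑ l, Q i l j :=
    fun i j => Finset.sum_pos (fun l _ => hQpos i l j) Finset.univ_nonempty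
  have hTval : ∀ i l j, T i l j = Q i l j * P i j / (∑ l', Q i l' j) :=
    fun _ _ _ => rfl
  have hTpos : ∀ i l j, 0 < T i l j := fun i l j => by
    rw [hTval]; exact div_pos (mul_pos (hQpos i l j) (hP i j)) (hQb i j)
  have ha : ∀ i l, 0 < ∑ j, T i l j :=
    fun i l => Finset.sum_pos (fun j _ => hTpos i l j) Finset.univ_nonempty
  have hs : ∀ l j, 0 < ∑ i, T i l j :=
    fun l j => Finset.sum_pos (fun i _ => hTpos i l j) Finset.univ_nonempty
  have hc : ∀ l, 0 < ∑ i, ∑ j, T i l j :=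
    fun l => Finset.sum_pos (fun i _ => ha i l) Finset.univ_nonempty
  have hQ2val : ∀ i l j, Q2 i l j =
      (∑ j', T i l j') * ((∑ i', T i' l j) / (∑ i', ∑ j', T i' l j')) :=
    fun _ _ _ => rfl
  have hQ2pos : ∀ i l j, 0 < Q2 i l j := fun i l j => by
    rw [hQ2val]; exact mul_pos (ha i l) (div_pos (hs l j) (hc l))
  have hQb2 : ∀ i j, 0 < ∑ l, Q2 i l j :=
    fun i j => Finset.sum_pos (fun l _ => hQ2pos i l j) Finset.univ_nonempty
  have hT2val : ∀ i l j, T2 i l j = Q2 i l j * P i j / (∑ l', Q2 i l' j) :=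
    fun _ _ _ => rfl
  have hT2pos : ∀ i l j, 0 < T2 i l j := fun i l j => by
    rw [hT2val]; exact div_pos (mul_pos (hQ2pos i l j) (hP i j)) (hQb2 i j)
  -- marginals
  have hTl : ∀ i j, ∑ l, T i l j = P i j := by
    intro i j
    have h1 : ∀ l, T i l j = Q i l j * P i j / (∑ l', Q i l' j) := fun l => hTval i l j
    rw [Finset.sum_congr rfl (fun l _ => h1 l), ← Finset.sum_div, ← Finset.sum_mul,
      mul_comm (∑ l, Q i l j) (P i j), mul_div_assoc, div_self (hQb i j).ne', mul_one]
  have hT2l : ∀ i j, ∑ l, T2 i l j = P i j := by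
    intro i j
    have h1 : ∀ l, T2 i l j = Q2 i l j * P i j / (∑ l', Q2 i l' j) := fun l => hT2val i l j
    rw [Finset.sum_congr rfl (fun l _ => h1 l), ← Finset.sum_div, ← Finset.sum_mul,
      mul_comm (∑ l, Q2 i l j) (P i j), mul_div_assoc, div_self (hQb2 i j).ne', mul_one]
  have hQ2j : ∀ i l, ∑ j, Q2 i l j = ∑ j, T i l j := by
    intro i l
    have h1 : ∀ j, Q2 i l j =
        (∑ j', T i l j') * ((∑ i', T i' l j) / (∑ i', ∑ j', T i' l j')) :=
      fun j => hQ2val i l j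
    rw [Finset.sum_congr rfl (fun j _ => h1 j), ← Finset.mul_sum, ← Finset.sum_div,
      Finset.sum_comm, div_self (hc l).ne', mul_one]
  have hQ2i : ∀ l j, ∑ i, Q2 i l j = ∑ i, T i l j := by
    intro l j
    have h1 : ∀ i, Q2 i l j =
        (∑ j', T i l j') * ((∑ i', T i' l j) / (∑ i', ∑ j', T i' l j')) :=
      fun i => hQ2val i l j
    rw [Finset.sum_congr rfl (fun i _ => h1 i), ← Finset.sum_mul, mul_comm,
      div_mul_cancel₀ _ (hc l).ne']
  -- log expansions
  have hlogT : ∀ i l j, Real.log (T i l j) =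
      Real.log (Q i l j) + Real.log (P i j) - Real.log (∑ l', Q i l' j) := by
    intro i l j
    rw [hTval, Real.log_div (mul_pos (hQpos i l j) (hP i j)).ne' (hQb i j).ne',
      Real.log_mul (hQpos i l j).ne' (hP i j).ne']
  have hlogT2 : ∀ i l j, Real.log (T2 i l j) =
      Real.log (Q2 i l j) + Real.log (P i j) - Real.log (∑ l', Q2 i l' j) := by
    intro i l j
    rw [hT2val, Real.log_div (mul_pos (hQ2pos i l j) (hP i j)).ne' (hQb2 i j).ne',
      Real.log_mul (hQ2pos i l j).ne' (hP i j).ne']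
  -- the four expansions
  have hDM1 : DM P (fun i j => ∑ l, Q i l j) =
      (∑ i, ∑ j, P i j * Real.log (P i j)) - (∑ i, ∑ j, P i j * Real.log (∑ l, Q i l j))
        - (∑ i, ∑ j, P i j) + (∑ i, ∑ j, ∑ l, Q i l j) := by
    have hpt : ∀ i j, P i j * Real.log (P i j / (∑ l, Q i l j)) - P i j + (∑ l, Q i l j)
        = (P i j * Real.log (P i j) - P i j * Real.log (∑ l, Q i l j) - P i j)
          + (∑ l, Q i l j) := by
      intro i j
      rw [Real.log_div (hP i j).ne' (hQb i j).ne']; ring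
    simp only [DM, hpt, Finset.sum_add_distrib, Finset.sum_sub_distrib]
  have hDM2 : DM P (fun i j => ∑ l, Q2 i l j) =
      (∑ i, ∑ j, P i j * Real.log (P i j)) - (∑ i, ∑ j, P i j * Real.log (∑ l, Q2 i l j))
        - (∑ i, ∑ j, P i j) + (∑ i, ∑ j, ∑ l, Q2 i l j) := by
    have hpt : ∀ i j, P i j * Real.log (P i j / (∑ l, Q2 i l j)) - P i j + (∑ l, Q2 i l j)
        = (P i j * Real.log (P i j) - P i j * Real.log (∑ l, Q2 i l j) - P i j)
          + (∑ l, Q2 i l j) := by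
      intro i j
      rw [Real.log_div (hP i j).ne' (hQb2 i j).ne']; ring
    simp only [DM, hpt, Finset.sum_add_distrib, Finset.sum_sub_distrib]
  have hDT1 : DT T T2 =
      (∑ i, ∑ l, ∑ j, T i l j * (Real.log (Q i l j) - Real.log (Q2 i l j)))
        - (∑ i, ∑ j, P i j * Real.log (∑ l, Q i l j))
        + (∑ i, ∑ j, P i j * Real.log (∑ l, Q2 i l j)) := by
    have hpt : ∀ i l j, T i l j * Real.log (T i l j / T2 i l j) - T i l j + T2 i l j
        = (((T i l j * (Real.log (Q i l j) - Real.log (Q2 i l j))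
            - T i l j * Real.log (∑ l', Q i l' j))
            + T i l j * Real.log (∑ l', Q2 i l' j)) - T i l j) + T2 i l j := by
      intro i l j
      rw [Real.log_div (hTpos i l j).ne' (hT2pos i l j).ne', hlogT, hlogT2]; ring
    simp only [DT, hpt, Finset.sum_add_distrib, Finset.sum_sub_distrib]
    have e2 : ∀ i, ∑ l, ∑ j, T i l j * Real.log (∑ l', Q i l' j)
        = ∑ j, P i j * Real.log (∑ l, Q i l j) := by
      intro i
      rw [Finset.sum_comm]
      exact Finset.sum_congr rfl fun j _ => by rw [← Finset.sum_mul, hTl i j]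
    have e3 : ∀ i, ∑ l, ∑ j, T i l j * Real.log (∑ l', Q2 i l' j)
        = ∑ j, P i j * Real.log (∑ l, Q2 i l j) := by
      intro i
      rw [Finset.sum_comm]
      exact Finset.sum_congr rfl fun j _ => by rw [← Finset.sum_mul, hTl i j]
    have e4 : ∀ i, ∑ l, ∑ j, T i l j = ∑ j, P i j := by
      intro i
      rw [Finset.sum_comm]
      exact Finset.sum_congr rfl fun j _ => hTl i j
    have e5 : ∀ i, ∑ l, ∑ j, T2 i l j = ∑ j, P i j := by
      intro i
      rw [Finset.sum_comm]
      exact Finset.sum_congr rfl fun j _ => hT2l i j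
    simp only [Finset.sum_congr rfl fun i _ => e2 i, Finset.sum_congr rfl fun i _ => e3 i,
      Finset.sum_congr rfl fun i _ => e4 i, Finset.sum_congr rfl fun i _ => e5 i]
    ring
  have hDT2 : DT Q2 Q =
      -(∑ i, ∑ l, ∑ j, Q2 i l j * (Real.log (Q i l j) - Real.log (Q2 i l j)))
        - (∑ i, ∑ j, ∑ l, Q2 i l j) + (∑ i, ∑ j, ∑ l, Q i l j) := by
    have hpt : ∀ i l j, Q2 i l j * Real.log (Q2 i l j / Q i l j) - Q2 i l j + Q i l j
        = (-(Q2 i l j * (Real.log (Q i l j) - Real.log (Q2 i l j))) - Q2 i l j)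
          + Q i l j := by
      intro i l j
      rw [Real.log_div (hQ2pos i l j).ne' (hQpos i l j).ne']; ring
    simp only [DT, hpt, Finset.sum_add_distrib, Finset.sum_sub_distrib, Finset.sum_neg_distrib]
    have e1 : ∀ i, ∑ l, ∑ j, Q2 i l j = ∑ j, ∑ l, Q2 i l j := fun i => Finset.sum_comm
    have e2 : ∀ i, ∑ l, ∑ j, Q i l j = ∑ j, ∑ l, Q i l j := fun i => Finset.sum_comm
    simp only [Finset.sum_congr rfl fun i _ => e1 i, Finset.sum_congr rfl fun i _ => e2 i]
  -- the key orthogonality identity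
  have hkey : (∑ i, ∑ l, ∑ j, T i l j * (Real.log (Q i l j) - Real.log (Q2 i l j)))
      = ∑ i, ∑ l, ∑ j, Q2 i l j * (Real.log (Q i l j) - Real.log (Q2 i l j)) := by
    have hzero : (∑ i, ∑ l, ∑ j,
        (T i l j - Q2 i l j) * (Real.log (Q i l j) - Real.log (Q2 i l j))) = 0 := by
      have hlog : ∀ i l j, Real.log (Q i l j) - Real.log (Q2 i l j)
          = (Real.log (Qm i l) - Real.log (∑ j', T i l j'))
            + (Real.log (Qp l j)
              - Real.log ((∑ i', T i' l j) / (∑ i', ∑ j', T i' l j'))) := by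
        intro i l j
        rw [hQ2val, show Q i l j = Qm i l * Qp l j from rfl,
          Real.log_mul (hQm i l).ne' (hQp l j).ne',
          Real.log_mul (ha i l).ne' (div_pos (hs l j) (hc l)).ne']
        ring
      have hsplit : ∀ i l j,
          (T i l j - Q2 i l j) * (Real.log (Q i l j) - Real.log (Q2 i l j))
          = (T i l j - Q2 i l j) * (Real.log (Qm i l) - Real.log (∑ j', T i l j'))
            + (T i l j - Q2 i l j) * (Real.log (Qp l j)
              - Real.log ((∑ i', T i' l j) / (∑ i', ∑ j', T i' l j'))) := by
        intro i l j; rw [hlog]; ring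
      simp only [hsplit, Finset.sum_add_distrib]
      have part1 : (∑ i, ∑ l, ∑ j, (T i l j - Q2 i l j)
          * (Real.log (Qm i l) - Real.log (∑ j', T i l j'))) = 0 := by
        have h1 : ∀ i l, ∑ j, (T i l j - Q2 i l j)
            * (Real.log (Qm i l) - Real.log (∑ j', T i l j')) = 0 := by
          intro i l
          rw [← Finset.sum_mul, Finset.sum_sub_distrib, hQ2j, sub_self, zero_mul]
        simp only [h1, Finset.sum_const_zero]
      have part2 : (∑ i, ∑ l, ∑ j, (T i l j - Q2 i l j)
          * (Real.log (Qp l j)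
            - Real.log ((∑ i', T i' l j) / (∑ i', ∑ j', T i' l j')))) = 0 := by
        have hswap : (∑ i, ∑ l, ∑ j, (T i l j - Q2 i l j)
            * (Real.log (Qp l j)
              - Real.log ((∑ i', T i' l j) / (∑ i', ∑ j', T i' l j'))))
            = ∑ l, ∑ j, ∑ i, (T i l j - Q2 i l j)
            * (Real.log (Qp l j)
              - Real.log ((∑ i', T i' l j) / (∑ i', ∑ j', T i' l j'))) := by
          rw [Finset.sum_comm]
          exact Finset.sum_congr rfl fun l _ => Finset.sum_comm
        rw [hswap]
        have h1 : ∀ l j, ∑ i, (T i l j - Q2 i l j)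
            * (Real.log (Qp l j)
              - Real.log ((∑ i', T i' l j) / (∑ i', ∑ j', T i' l j'))) = 0 := by
          intro l j
          rw [← Finset.sum_mul, Finset.sum_sub_distrib, hQ2i, sub_self, zero_mul]
        simp only [h1, Finset.sum_const_zero]
      rw [part1, part2, add_zero]
    have hFG : (∑ i, ∑ l, ∑ j, T i l j * (Real.log (Q i l j) - Real.log (Q2 i l j)))
        - (∑ i, ∑ l, ∑ j, Q2 i l j * (Real.log (Q i l j) - Real.log (Q2 i l j)))
        = ∑ i, ∑ l, ∑ j,
          (T i l j - Q2 i l j) * (Real.log (Q i l j) - Real.log (Q2 i l j)) := by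
      simp only [sub_mul, Finset.sum_sub_distrib]
    linarith [hFG, hzero]
  linarith [hDM1, hDM2, hDT1, hDT2, hkey]

theorem alternating_min_gain_identity {m k n : ℕ}
    (P : Matrix (Fin m) (Fin n) ℝ) (hP : ∀ i j, 0 < P i j)
    (Qm : Matrix (Fin m) (Fin k) ℝ) (Qp : Matrix (Fin k) (Fin n) ℝ)
    (hQm : ∀ i l, 0 < Qm i l) (hQp : ∀ l j, 0 < Qp l j)
    (hrow : ∀ l, ∑ j, Qp l j = 1) :
    DM P (fun i j => ∑ l, (fun i l j => Qm i l * Qp l j) i l j) =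
      DT (Pstar (fun i l j => Qm i l * Qp l j) P)
         (Pstar (Qstar (Pstar (fun i l j => Qm i l * Qp l j) P)) P) +
      DM P (fun i j => ∑ l,
         (Qstar (Pstar (fun i l j => Qm i l * Qp l j) P)) i l j) +
      DT (Qstar (Pstar (fun i l j => Qm i l * Qp l j) P))
         (fun i l j => Qm i l * Qp l j) := by
  rcases Nat.eq_zero_or_pos m with hm | hm
  · subst hm; simp [DM, DT]
  rcases Nat.eq_zero_or_pos n with hn | hn
  · subst hn; simp [DM, DT]
  rcases Nat.eq_zero_or_pos k with hk | hk
  · subst hk; simp [DM, DT]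
  exact aux hm hk hn P hP Qm Qp hQm hQp
end

section
/- Let Y₋, Y₊ be finite-valued random variables with joint distribution P(i,j) = Prob(Y₋=i, Y₊=j). Then there exists a random variable X taking values in {1,…,k} (on a possibly enlarged probability space) such that Y₋ and Y₊ are conditionally independent given X if and only if the matrix P admits a nonnegative factorization P = Q₋Q₊ with Q₋ ∈ ℝ_+^{m×k}, Q₊ ∈ ℝ_+^{k×n} and Q₊ row stochastic, where Q₋(i,l) = Prob(Y₋=i, X=l) and Q₊(l,j) = Prob(Y₊=j | X=l). -/
/-!
Under conditional independence the joint law `R(i,l,j)` of `(Y₋, X, Y₊)` factors as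
`Prob(Y₋=i, X=l) · Prob(Y₊=j | X=l)`; summing out `l` gives `P = Q₋ Q₊`. Conversely, from
`P = Q₋ Q₊` the product `Q₋(i,l) Q₊(l,j)` is a joint law with marginal `P`, and a product of a
function of `(i,l)` and one of `(l,j)` is always conditionally independent given `l`.
-/

open Finset

namespace HiddenVariable

variable {α κ β : Type*}

/-- Conditional independence of the outer coordinates given the middle one, with denominators
cleared, so that it holds trivially on null slices `R · l · = 0`. -/
def IsCondIndep [Fintype α] [Fintype β] {S : Type*} [CommSemiring S] (R : α → κ → β → S) :
    Prop :=
  ∀ i l j, R i l j * (∑ i', ∑ j', R i' l j') = (∑ j', R i l j') * (∑ i', R i' l j)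

theorem isCondIndep_mul [Fintype α] [Fintype β] {S : Type*} [CommSemiring S]
    (A : α → κ → S) (B : κ → β → S) : IsCondIndep fun i l j => A i l * B l j := by
  intro i l j
  simp only [← mul_sum, ← sum_mul]
  ring

theorem sum_sum_sum_mul_eq_sum_sum_mul [Fintype α] [Fintype κ] [Fintype β] {S : Type*}
    [CommSemiring S] (A : Matrix α κ S) (B : Matrix κ β S) :
    ∑ i, ∑ l, ∑ j, A i l * B l j = ∑ i, ∑ j, (A * B) i j := by
  simp only [Matrix.mul_apply]
  exact sum_congr rfl fun i _ => sum_comm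

section NormalizeRows

variable [Fintype β] [DecidableEq β] {𝕜 : Type*} [Field 𝕜]

open Classical in
/-- Row `l` is `Prob(Y₊ = · | X = l)`; when `X = l` is a null event any law will do, and we take
the point mass at `j₀`. -/
noncomputable def normalizeRows (M : κ → β → 𝕜) (j₀ : β) : Matrix κ β 𝕜 :=
  Matrix.of fun l j =>
    if ∑ j', M l j' = 0 then (Pi.single j₀ 1 : β → 𝕜) j else M l j / ∑ j', M l j'

theorem normalizeRows_apply_of_ne {M : κ → β → 𝕜} {l : κ} (hl : ∑ j', M l j' ≠ 0)
    (j₀ j : β) : normalizeRows M j₀ l j = M l j / ∑ j', M l j' :=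
  if_neg hl

theorem sum_normalizeRows (M : κ → β → 𝕜) (j₀ : β) (l : κ) :
    ∑ j, normalizeRows M j₀ l j = 1 := by
  by_cases hl : ∑ j', M l j' = 0
  · simp [normalizeRows, hl]
  · simp only [normalizeRows_apply_of_ne hl, ← sum_div, div_self hl]

theorem normalizeRows_nonneg [LinearOrder 𝕜] [IsStrictOrderedRing 𝕜] {M : κ → β → 𝕜}
    (hM : ∀ l j, 0 ≤ M l j) (j₀ : β) (l : κ) (j : β) : 0 ≤ normalizeRows M j₀ l j := by
  rw [normalizeRows, Matrix.of_apply]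
  split_ifs
  · exact (Pi.single_nonneg (α := fun _ : β => 𝕜)).mpr zero_le_one j
  · exact div_nonneg (hM l j) (sum_nonneg fun j' _ => hM l j')

end NormalizeRows

variable [Fintype α] [Fintype β] [DecidableEq β]
  {𝕜 : Type*} [Field 𝕜] [LinearOrder 𝕜] [IsStrictOrderedRing 𝕜]

theorem IsCondIndep.eq_mul_normalizeRows {R : α → κ → β → 𝕜} (hR : ∀ i l j, 0 ≤ R i l j)
    (hCI : IsCondIndep R) (j₀ : β) (i : α) (l : κ) (j : β) :
    R i l j = (∑ j', R i l j') * normalizeRows (fun l j => ∑ i, R i l j) j₀ l j := by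
  have hswap : ∑ j', ∑ i', R i' l j' = ∑ i', ∑ j', R i' l j' := sum_comm
  by_cases hl : ∑ j', ∑ i', R i' l j' = 0
  · have hzero : ∀ i j, R i l j = 0 := fun i j =>
      (sum_eq_zero_iff_of_nonneg fun j' _ => hR i l j').mp
        ((sum_eq_zero_iff_of_nonneg fun i' _ => sum_nonneg fun j' _ => hR i' l j').mp
          (hswap ▸ hl) i (mem_univ i)) j (mem_univ j)
    simp [hzero]
  · rw [normalizeRows_apply_of_ne hl, ← mul_div_assoc, eq_div_iff hl, hswap]
    exact hCI i l j

theorem IsCondIndep.exists_nmf [Fintype κ] {R : α → κ → β → 𝕜} (hR : ∀ i l j, 0 ≤ R i l j)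
    (hCI : IsCondIndep R) (j₀ : β) :
    ∃ (Qm : Matrix α κ 𝕜) (Qp : Matrix κ β 𝕜),
      (∀ i l, 0 ≤ Qm i l) ∧ (∀ l j, 0 ≤ Qp l j) ∧
      (∀ l, ∑ j, Qp l j = 1) ∧ ∀ i j, ∑ l, R i l j = (Qm * Qp) i j := by
  refine ⟨Matrix.of fun i l => ∑ j, R i l j, normalizeRows (fun l j => ∑ i, R i l j) j₀,
    fun i l => sum_nonneg fun j _ => hR i l j,
    normalizeRows_nonneg (fun l j => sum_nonneg fun i _ => hR i l j) j₀,
    sum_normalizeRows _ j₀, fun i j => ?_⟩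
  rw [Matrix.mul_apply]
  exact sum_congr rfl fun l _ => hCI.eq_mul_normalizeRows hR j₀ i l j

end HiddenVariable

open HiddenVariable

theorem hidden_variable_iff_nmf_general {m n k : ℕ}
    (P : Matrix (Fin m) (Fin n) ℝ)
    (hPsum : ∑ i, ∑ j, P i j = 1) :
    (∃ R : Fin m → Fin k → Fin n → ℝ,
      (∀ i l j, 0 ≤ R i l j) ∧
      (∑ i, ∑ l, ∑ j, R i l j = 1) ∧
      (∀ i j, ∑ l, R i l j = P i j) ∧
      -- conditional independence of Y₋ and Y₊ given X
      (∀ i l j, R i l j * (∑ i', ∑ j', R i' l j') =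
        (∑ j', R i l j') * (∑ i', R i' l j))) ↔
    (∃ (Qm : Matrix (Fin m) (Fin k) ℝ) (Qp : Matrix (Fin k) (Fin n) ℝ),
      (∀ i l, 0 ≤ Qm i l) ∧ (∀ l j, 0 ≤ Qp l j) ∧
      (∀ l, ∑ j, Qp l j = 1) ∧ P = Qm * Qp) := by
  constructor
  · rintro ⟨R, hR, -, hRP, hCI⟩
    -- a row-stochastic `Qp` needs a column to put the mass of null rows in
    have : NeZero n := ⟨by rintro rfl; simp at hPsum⟩
    obtain ⟨Qm, Qp, hQm, hQp, hQrow, hfac⟩ := IsCondIndep.exists_nmf hR hCI 0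
    exact ⟨Qm, Qp, hQm, hQp, hQrow, by ext i j; rw [← hRP, hfac]⟩
  · rintro ⟨Qm, Qp, hQm, hQp, -, rfl⟩
    exact ⟨fun i l j => Qm i l * Qp l j, fun i l j => mul_nonneg (hQm i l) (hQp l j),
      (sum_sum_sum_mul_eq_sum_sum_mul Qm Qp).trans hPsum,
      fun i j => (Matrix.mul_apply ..).symm, isCondIndep_mul Qm Qp⟩

theorem hidden_variable_iff_nmf {m n k : ℕ}
    (P : Matrix (Fin m) (Fin n) ℝ)
    (hP : ∀ i j, 0 ≤ P i j) (hPsum : ∑ i, ∑ j, P i j = 1) :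
    (∃ R : Fin m → Fin k → Fin n → ℝ,
      (∀ i l j, 0 ≤ R i l j) ∧
      (∑ i, ∑ l, ∑ j, R i l j = 1) ∧
      (∀ i j, ∑ l, R i l j = P i j) ∧
      -- conditional independence of Y₋ and Y₊ given X
      (∀ i l j, R i l j * (∑ i', ∑ j', R i' l j') =
        (∑ j', R i l j') * (∑ i', R i' l j))) ↔
    (∃ (Qm : Matrix (Fin m) (Fin k) ℝ) (Qp : Matrix (Fin k) (Fin n) ℝ),
      (∀ i l, 0 ≤ Qm i l) ∧ (∀ l j, 0 ≤ Qp l j) ∧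
      (∀ l, ∑ j, Qp l j = 1) ∧ P = Qm * Qp) :=
  hidden_variable_iff_nmf_general P hPsum
end
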